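/- arXiv:2408.05487 — 8 statements merged into one kernel-verified Lean document; each statement's English description precedes it below -/
import Mathlib

section
/- The function F(x) = 1 - x^4 - 4x^2·ψ'(1/(1-x)), defined for x ∈ (0,1), satisfies F(x) = (10/3)(1-x)³ + O((1-x)⁴) as x → 1⁻. -/
open Real Filter Asymptotics MeasureTheory Set Topology

noncomputable def trigamma (y : ℝ) : ℝ := ∑' m : ℕ, 1 / (m + y)^2

noncomputable def psi2 (y : ℝ) : ℝ := -2 * ∑' m : ℕ, 1 / (m + y)^3

/-! The truncated expansion `g(z) = 1/z + 1/(2z²) + 1/(6z³)` satisfies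
`g(z) - g(z+1) = 1/z² + 1/(6z³(z+1)³)`, so telescoping over `z = m + y` gives
`ψ'(y) = g(y) - ∑ₘ 1/(6z³(z+1)³)`. Each error term is at most `(1/z - 1/(z+1)) / (6y⁴)`, which
telescopes again, so `0 ≤ g(y) - ψ'(y) ≤ 1/(6y⁵)` for every `y > 0`. With `t = 1 - x` and
`y = 1/t`, `F(x) - (10/3)t³ = -(5/3)t⁴ - (2/3)t⁵ + 4x²(g(y) - ψ'(y))`. -/

noncomputable def trigammaApprox (y : ℝ) : ℝ := 1 / y + 1 / (2 * y ^ 2) + 1 / (6 * y ^ 3)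

theorem hasSum_sub_succ_of_antitone {u : ℕ → ℝ} (hu : Antitone u)
    (h0 : Tendsto u atTop (𝓝 0)) : HasSum (fun n => u n - u (n + 1)) (u 0) := by
  refine (hasSum_iff_tendsto_nat_of_nonneg (fun n => sub_nonneg.2 (hu n.le_succ)) _).2 ?_
  simp_rw [Finset.sum_range_sub']
  simpa using tendsto_const_nhds.sub h0

theorem tendsto_natCast_add_atTop (y : ℝ) : Tendsto (fun m : ℕ => (m : ℝ) + y) atTop atTop :=
  tendsto_atTop_add_const_right _ y tendsto_natCast_atTop_atTop

theorem hasSum_one_div_sub_one_div_succ {y : ℝ} (hy : 0 < y) :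
    HasSum (fun m : ℕ => 1 / ((m : ℝ) + y) - 1 / ((m : ℝ) + y + 1)) (1 / y) := by
  have hu : Antitone fun m : ℕ => 1 / ((m : ℝ) + y) := fun m n hmn =>
    one_div_le_one_div_of_le (by positivity) (by gcongr)
  have h0 : Tendsto (fun m : ℕ => 1 / ((m : ℝ) + y)) atTop (𝓝 0) :=
    (tendsto_natCast_add_atTop y).inv_tendsto_atTop.congr fun m => (one_div _).symm
  simpa [add_right_comm] using hasSum_sub_succ_of_antitone hu h0

theorem trigammaApprox_sub_add_one {z : ℝ} (hz : 0 < z) :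
    trigammaApprox z - trigammaApprox (z + 1) = 1 / z ^ 2 + 1 / (6 * z ^ 3 * (z + 1) ^ 3) := by
  unfold trigammaApprox
  field_simp
  ring

theorem tendsto_trigammaApprox_atTop : Tendsto trigammaApprox atTop (𝓝 0) := by
  have hpow : ∀ k : ℕ, k ≠ 0 → Tendsto (fun z : ℝ => 1 / (z ^ k)) atTop (𝓝 0) := fun k hk =>
    (tendsto_pow_atTop hk).inv_tendsto_atTop.congr fun z => (one_div _).symm
  have h := (hpow 1 one_ne_zero).add
    (((hpow 2 two_ne_zero).const_mul (1 / 2)).add ((hpow 3 three_ne_zero).const_mul (1 / 6)))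
  simp only [mul_zero, add_zero] at h
  refine h.congr fun z => ?_
  simp only [trigammaApprox, pow_one, one_div, mul_inv, add_assoc]

theorem hasSum_trigammaApprox {y : ℝ} (hy : 0 < y) :
    HasSum
      (fun m : ℕ => 1 / ((m : ℝ) + y) ^ 2 + 1 / (6 * ((m : ℝ) + y) ^ 3 * ((m : ℝ) + y + 1) ^ 3))
      (trigammaApprox y) := by
  have hdiff : ∀ m : ℕ, trigammaApprox ((m : ℝ) + y) - trigammaApprox ((m : ℝ) + y + 1) =
      1 / ((m : ℝ) + y) ^ 2 + 1 / (6 * ((m : ℝ) + y) ^ 3 * ((m : ℝ) + y + 1) ^ 3) :=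
    fun m => trigammaApprox_sub_add_one (by positivity)
  have hu : Antitone fun m : ℕ => trigammaApprox ((m : ℝ) + y) := by
    refine antitone_nat_of_succ_le fun m => sub_nonneg.1 ?_
    rw [Nat.cast_succ, add_right_comm, hdiff]
    positivity
  have h := hasSum_sub_succ_of_antitone hu
    (tendsto_trigammaApprox_atTop.comp (tendsto_natCast_add_atTop y))
  simp only [Nat.cast_succ, add_right_comm _ (1 : ℝ), hdiff, Nat.cast_zero, zero_add] at h
  exact h

theorem one_div_six_mul_pow_three_mul_pow_three_le {y z : ℝ} (hy : 0 < y) (hyz : y ≤ z) :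
    1 / (6 * z ^ 3 * (z + 1) ^ 3) ≤ 1 / (6 * y ^ 4) * (1 / z - 1 / (z + 1)) := by
  have hz : 0 < z := hy.trans_le hyz
  have hz2 : y ^ 2 ≤ z ^ 2 := by gcongr
  have hz12 : y ^ 2 ≤ (z + 1) ^ 2 := by gcongr; linarith
  have hsub : 1 / z - 1 / (z + 1) = 1 / (z * (z + 1)) := by field_simp; ring
  rw [hsub, div_mul_div_comm, one_mul, one_div_le_one_div (by positivity) (by positivity)]
  calc 6 * y ^ 4 * (z * (z + 1)) = 6 * (y ^ 2 * z) * (y ^ 2 * (z + 1)) := by ring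
    _ ≤ 6 * (z ^ 2 * z) * ((z + 1) ^ 2 * (z + 1)) := by gcongr
    _ = 6 * z ^ 3 * (z + 1) ^ 3 := by ring

theorem abs_trigamma_sub_trigammaApprox_le {y : ℝ} (hy : 0 < y) :
    |trigamma y - trigammaApprox y| ≤ 1 / (6 * y ^ 5) := by
  set e : ℕ → ℝ := fun m => 1 / (6 * ((m : ℝ) + y) ^ 3 * ((m : ℝ) + y + 1) ^ 3)
  have he0 : ∀ m, 0 ≤ e m := fun m => by positivity
  have hte := hasSum_one_div_sub_one_div_succ hy
  have hle : ∀ m : ℕ, e m ≤ 1 / (6 * y ^ 4) * (1 / ((m : ℝ) + y) - 1 / ((m : ℝ) + y + 1)) :=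
    fun m => one_div_six_mul_pow_three_mul_pow_three_le hy (by simp)
  have hse : Summable e := (hte.summable.mul_left _).of_nonneg_of_le he0 hle
  have hsq : HasSum (fun m : ℕ => 1 / ((m : ℝ) + y) ^ 2) (trigammaApprox y - ∑' m, e m) := by
    simpa [e] using (hasSum_trigammaApprox hy).sub hse.hasSum
  have hub : ∑' m, e m ≤ 1 / (6 * y ^ 4) * (1 / y) := hasSum_le hle hse.hasSum (hte.mul_left _)
  have hlb : 0 ≤ ∑' m, e m := tsum_nonneg he0
  rw [trigamma, hsq.tsum_eq, sub_sub_cancel_left, abs_neg, abs_of_nonneg hlb]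
  convert hub using 1
  field_simp

theorem trigammaApprox_one_div (t : ℝ) : trigammaApprox (1 / t) = t + t ^ 2 / 2 + t ^ 3 / 6 := by
  simp only [trigammaApprox, one_div, inv_pow, mul_inv, inv_inv]
  ring

theorem abs_one_sub_pow_four_sub_trigamma_one_div_le {t : ℝ} (ht0 : 0 < t) (ht1 : t ≤ 1) :
    |1 - (1 - t) ^ 4 - 4 * (1 - t) ^ 2 * trigamma (1 / t) - 10 / 3 * t ^ 3| ≤ 3 * t ^ 4 := by
  have hr := abs_trigamma_sub_trigammaApprox_le (one_div_pos.2 ht0)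
  rw [trigammaApprox_one_div, one_div_pow, ← div_eq_mul_one_div, one_div_div] at hr
  set δ := trigamma (1 / t) - (t + t ^ 2 / 2 + t ^ 3 / 6)
  have hexpand : 1 - (1 - t) ^ 4 - 4 * (1 - t) ^ 2 * trigamma (1 / t) - 10 / 3 * t ^ 3 =
      -(5 / 3) * t ^ 4 - (2 / 3) * t ^ 5 - 4 * (1 - t) ^ 2 * δ := by
    simp only [δ]; ring
  have hδ : |4 * (1 - t) ^ 2 * δ| ≤ 4 * (t ^ 5 / 6) := by
    rw [abs_mul, abs_of_nonneg (by positivity : (0 : ℝ) ≤ 4 * (1 - t) ^ 2)]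
    have : (1 - t) ^ 2 ≤ 1 := by nlinarith
    nlinarith [abs_nonneg δ]
  have ht5 : t ^ 5 ≤ t ^ 4 := pow_le_pow_of_le_one ht0.le ht1 (by norm_num)
  rw [hexpand, abs_le]
  obtain ⟨hlo, hhi⟩ := abs_le.1 hδ
  constructor <;> nlinarith [pow_pos ht0 4]

theorem stmt1 :
    (fun x : ℝ => (1 - x^4 - 4*x^2 * trigamma (1/(1-x))) - (10/3)*(1-x)^3)
      =O[𝓝[Set.Ioo (0:ℝ) 1] 1] fun x => (1-x)^4 := by
  refine IsBigO.of_bound 3 ?_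
  filter_upwards [self_mem_nhdsWithin] with x ⟨hx0, hx1⟩
  obtain ⟨t, ht0, ht1, rfl⟩ : ∃ t, 0 < t ∧ t ≤ 1 ∧ x = 1 - t :=
    ⟨1 - x, by linarith, by linarith, by ring⟩
  rw [sub_sub_cancel, Real.norm_eq_abs, Real.norm_eq_abs, abs_of_pos (pow_pos ht0 4)]
  exact abs_one_sub_pow_four_sub_trigamma_one_div_le ht0 ht1
end

section
/- For all y ∈ (1, ∞), the quantity G(y) := (y-1)y³ψ''(y) + (y-1)² + 2y²ψ'(y) is strictly positive. -/
open Real Filter Asymptotics MeasureTheory Set Topology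

/-!
Both series are bounded termwise by telescoping series. Since
`1/x + 1/(2x²) - 1/(x+1) - 1/(2(x+1)²) = 1/x² - 1/(2x²(x+1)²)`, summing from `x = y` gives
`ψ'(y) ≥ 1/y + 1/(2y²)`; since `2/(2x-1)² - 2/(2x+1)² = 16x/(4x²-1)² ≥ 1/x³` for `x > 1/2`, it
gives `ψ''(y) ≥ -4/(2y-1)²`. Substituting both bounds into `G(y)` (the coefficient `(y-1)y³`
of `ψ''` is nonnegative) leaves `(9y² - 8y + 2)/(2y-1)²`, a quadratic with negative discriminant.
-/

theorem Antitone.hasSum_sub_succ {f : ℕ → ℝ} (hf : Antitone f)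
    (hlim : Tendsto f atTop (𝓝 0)) :
    HasSum (fun n => f n - f (n + 1)) (f 0) := by
  rw [hasSum_iff_tendsto_nat_of_nonneg fun n => sub_nonneg.2 (hf n.le_succ)]
  simp_rw [Finset.sum_range_sub']
  simpa using tendsto_const_nhds.sub hlim

section Telescoping

variable {φ g : ℝ → ℝ} {y : ℝ}

theorem hasSum_sub_add_one (hstep : ∀ x, y ≤ x → φ (x + 1) ≤ φ x)
    (hlim : Tendsto φ atTop (𝓝 0)) :
    HasSum (fun n : ℕ => φ (n + y) - φ (n + y + 1)) (φ y) := by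
  have hanti : Antitone fun n : ℕ => φ (n + y) := antitone_nat_of_succ_le fun n => by
    rw [Nat.cast_succ, add_right_comm]
    exact hstep _ (le_add_of_nonneg_left n.cast_nonneg)
  have hlim' : Tendsto (fun n : ℕ => φ (n + y)) atTop (𝓝 0) :=
    hlim.comp (tendsto_atTop_add_const_right _ y tendsto_natCast_atTop_atTop)
  simpa [Nat.cast_succ, add_right_comm] using hanti.hasSum_sub_succ hlim'

theorem tsum_le_of_le_sub_add_one (hlim : Tendsto φ atTop (𝓝 0))
    (hg : ∀ x, y ≤ x → 0 ≤ g x ∧ g x ≤ φ x - φ (x + 1)) :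
    ∑' n : ℕ, g (n + y) ≤ φ y := by
  have hy (n : ℕ) : y ≤ n + y := le_add_of_nonneg_left n.cast_nonneg
  have hsum := hasSum_sub_add_one
    (fun x hx => sub_nonneg.1 ((hg x hx).1.trans (hg x hx).2)) hlim
  have hle (n : ℕ) : g (n + y) ≤ φ (n + y) - φ (n + y + 1) := (hg _ (hy n)).2
  have hg_summable : Summable fun n : ℕ => g (n + y) :=
    .of_nonneg_of_le (fun n => (hg _ (hy n)).1) hle hsum.summable
  exact hsum.tsum_eq ▸ hg_summable.tsum_le_tsum hle hsum.summable

theorem le_tsum_of_sub_add_one_le (hstep : ∀ x, y ≤ x → φ (x + 1) ≤ φ x)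
    (hlim : Tendsto φ atTop (𝓝 0)) (hg : Summable fun n : ℕ => g (n + y))
    (hle : ∀ x, y ≤ x → φ x - φ (x + 1) ≤ g x) :
    φ y ≤ ∑' n : ℕ, g (n + y) :=
  hasSum_le (fun n => hle _ (le_add_of_nonneg_left n.cast_nonneg))
    (hasSum_sub_add_one hstep hlim) hg.hasSum

end Telescoping

theorem summable_one_div_nat_add_sq (a : ℝ) :
    Summable fun n : ℕ => 1 / ((n : ℝ) + a) ^ 2 := by
  simpa [sq_abs] using (Real.summable_one_div_nat_add_rpow a 2).2 one_lt_two

theorem one_div_add_one_div_two_mul_sq_le_trigamma {y : ℝ} (hy : 0 < y) :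
    1 / y + 1 / (2 * y ^ 2) ≤ trigamma y := by
  have hlim : Tendsto (fun x : ℝ => 1 / x + 1 / (2 * x ^ 2)) atTop (𝓝 0) := by
    simpa [one_div] using tendsto_inv_atTop_zero.add (tendsto_inv_atTop_zero.comp
      ((tendsto_pow_atTop two_ne_zero).const_mul_atTop (two_pos : (0 : ℝ) < 2)))
  refine le_tsum_of_sub_add_one_le (g := fun x => 1 / x ^ 2) (fun x hx => ?_) hlim
    (summable_one_div_nat_add_sq y) (fun x hx => ?_)
  · have hx : 0 < x := hy.trans_le hx
    gcongr <;> linarith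
  · have hx : 0 < x := hy.trans_le hx
    have hdiff : 1 / x + 1 / (2 * x ^ 2) - (1 / (x + 1) + 1 / (2 * (x + 1) ^ 2))
        = 1 / x ^ 2 - 1 / (2 * x ^ 2 * (x + 1) ^ 2) := by
      field_simp
      ring
    rw [hdiff]
    exact sub_le_self _ (by positivity)

theorem neg_four_div_two_mul_sub_one_sq_le_psi2 {y : ℝ} (hy : 1 / 2 < y) :
    -(4 / (2 * y - 1) ^ 2) ≤ psi2 y := by
  have hlim : Tendsto (fun x : ℝ => 2 / (2 * x - 1) ^ 2) atTop (𝓝 0) :=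
    tendsto_const_nhds.div_atTop <| (tendsto_pow_atTop two_ne_zero).comp <|
      tendsto_atTop_add_const_right _ (-1) (tendsto_id.const_mul_atTop two_pos)
  have hsum : ∑' n : ℕ, 1 / ((n : ℝ) + y) ^ 3 ≤ 2 / (2 * y - 1) ^ 2 :=
    tsum_le_of_le_sub_add_one (g := fun x => 1 / x ^ 3) hlim fun x hx => by
      have hx : 1 / 2 < x := hy.trans_le hx
      have hx₀ : 0 < 4 * x ^ 2 - 1 := by nlinarith
      have hdiff :
          2 / (2 * x - 1) ^ 2 - 2 / (2 * (x + 1) - 1) ^ 2 = 16 * x / (4 * x ^ 2 - 1) ^ 2 := by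
        have h₁ : 2 * x - 1 ≠ 0 := by linarith
        have h₂ : 2 * (x + 1) - 1 ≠ 0 := by linarith
        rw [div_sub_div _ _ (by positivity) (by positivity),
          div_eq_div_iff (by positivity) (by positivity)]
        ring
      refine ⟨by positivity, ?_⟩
      rw [hdiff, div_le_div_iff₀ (by positivity) (by positivity), one_mul]
      calc (4 * x ^ 2 - 1) ^ 2 ≤ (4 * x ^ 2) ^ 2 := by gcongr; linarith
        _ = 16 * x * x ^ 3 := by ring
  rw [psi2]
  linarith [show 4 / (2 * y - 1) ^ 2 = 2 * (2 / (2 * y - 1) ^ 2) by ring]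

theorem pos_of_neg_four_div_le_of_le {y a b : ℝ} (hy : 1 < y) (ha : -(4 / (2 * y - 1) ^ 2) ≤ a)
    (hb : 1 / y + 1 / (2 * y ^ 2) ≤ b) :
    0 < (y - 1) * y ^ 3 * a + (y - 1) ^ 2 + 2 * y ^ 2 * b := by
  have hd : 0 < (2 * y - 1) ^ 2 := by nlinarith
  have hb' : 2 * y ^ 2 * (1 / y + 1 / (2 * y ^ 2)) = 2 * y + 1 := by field_simp
  have hquot : 4 * (y - 1) * y ^ 3 / (2 * y - 1) ^ 2 < y ^ 2 + 2 := by
    rw [div_lt_iff₀ hd]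
    -- the difference is `9y² - 8y + 2`
    nlinarith [sq_nonneg (3 * y - 4 / 3)]
  have hy₁ : 0 ≤ y - 1 := by linarith
  calc 0 < -(4 * (y - 1) * y ^ 3 / (2 * y - 1) ^ 2) + (y - 1) ^ 2 + (2 * y + 1) := by linarith
    _ = (y - 1) * y ^ 3 * -(4 / (2 * y - 1) ^ 2) + (y - 1) ^ 2
        + 2 * y ^ 2 * (1 / y + 1 / (2 * y ^ 2)) := by rw [hb']; ring
    _ ≤ (y - 1) * y ^ 3 * a + (y - 1) ^ 2 + 2 * y ^ 2 * b := by gcongr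

theorem stmt4 (y : ℝ) (hy : 1 < y) :
    0 < (y-1)*y^3*psi2 y + (y-1)^2 + 2*y^2*trigamma y :=
  pos_of_neg_four_div_le_of_le hy (neg_four_div_two_mul_sub_one_sq_le_psi2 (by linarith))
    (one_div_add_one_div_two_mul_sq_le_trigamma (by linarith))
end

section
/- Let 0 < a < c and define R_e(θ) = (c-a)sin θ + sqrt(a(2c-a)cos²θ + c²sin²θ). Then ∫_{-π}^{π} R_e(θ)² dθ = 2πc². -/
open Real Filter Asymptotics MeasureTheory Set Topology

theorem stmt6 (a c : ℝ) (ha : 0 < a) (hac : a < c) :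
    ∫ θ in (-π)..π,
        ((c-a)*Real.sin θ + Real.sqrt (a*(2*c-a)*Real.cos θ^2 + c^2*Real.sin θ^2))^2
      = 2*π*c^2 := by
  have h2ca : 0 < 2*c - a := by linarith
  set Q : ℝ → ℝ := fun θ => a*(2*c-a)*Real.cos θ^2 + c^2*Real.sin θ^2 with hQdef
  have hQ0 : ∀ θ, 0 ≤ Q θ := fun θ => by
    have : 0 ≤ a*(2*c-a) := by positivity
    positivity
  set E : ℝ → ℝ := fun θ => ((c-a)^2 + c^2) * Real.sin θ^2 + a*(2*c-a)*Real.cos θ^2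
    with hEdef
  set O : ℝ → ℝ := fun θ => 2*(c-a)*Real.sin θ * Real.sqrt (Q θ) with hOdef
  have expand : ∀ θ, ((c-a)*Real.sin θ + Real.sqrt (Q θ))^2 = E θ + O θ := by
    intro θ
    have h := Real.sq_sqrt (hQ0 θ)
    simp only [hEdef, hOdef, hQdef] at h ⊢
    linear_combination h
  have hQcont : Continuous Q := by
    simp only [hQdef]; continuity
  have hEint : IntervalIntegrable E volume (-π) π := by
    apply Continuous.intervalIntegrable
    simp only [hEdef]; continuity
  have hOint : IntervalIntegrable O volume (-π) π := by
    apply Continuous.intervalIntegrable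
    simp only [hOdef]
    exact ((continuous_const.mul Real.continuous_sin).mul (hQcont.sqrt))
  have step1 : (∫ θ in (-π)..π,
      ((c-a)*Real.sin θ + Real.sqrt (a*(2*c-a)*Real.cos θ^2 + c^2*Real.sin θ^2))^2)
      = (∫ θ in (-π)..π, E θ) + ∫ θ in (-π)..π, O θ := by
    rw [← intervalIntegral.integral_add hEint hOint]
    exact intervalIntegral.integral_congr fun θ _ => expand θ
  have hO : (∫ θ in (-π)..π, O θ) = 0 := by
    have h1 : (∫ θ in (-π)..π, O (-θ)) = ∫ θ in (-π)..π, O θ := by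
      simpa using intervalIntegral.integral_comp_neg (a := -π) (b := π) O
    have h2 : ∀ θ, O (-θ) = - O θ := by
      intro θ
      simp only [hOdef, hQdef, Real.sin_neg, Real.cos_neg, neg_sq]
      ring
    have h3 : (∫ θ in (-π)..π, O (-θ)) = - ∫ θ in (-π)..π, O θ := by
      rw [intervalIntegral.integral_congr (g := fun θ => - O θ) fun θ _ => h2 θ,
        intervalIntegral.integral_neg]
    linarith [h1, h3]
  have hE : (∫ θ in (-π)..π, E θ) = 2*π*c^2 := by
    have hsin : IntervalIntegrable (fun θ => ((c-a)^2 + c^2) * Real.sin θ^2)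
        volume (-π) π := by apply Continuous.intervalIntegrable; continuity
    have hcos : IntervalIntegrable (fun θ => a*(2*c-a)*Real.cos θ^2)
        volume (-π) π := by apply Continuous.intervalIntegrable; continuity
    simp only [hEdef]
    rw [intervalIntegral.integral_add hsin hcos,
      intervalIntegral.integral_const_mul, intervalIntegral.integral_const_mul,
      integral_sin_sq, integral_cos_sq]
    simp [Real.sin_pi, Real.cos_pi]
    ring
  rw [step1, hO, hE]; ring
end

section
/- Let 0 < a < c and define R_e(θ) = (c-a)sin θ + sqrt(a(2c-a)cos²θ + c²sin²θ). Then ∫_{-π}^{π} R_e(θ)⁴ dθ = 2πc²(2a² - 4ac + 3c²). -/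
open Real Filter Asymptotics MeasureTheory Set Topology

theorem stmt7 (a c : ℝ) (ha : 0 < a) (hac : a < c) :
    ∫ θ in (-π)..π,
        ((c-a)*Real.sin θ + Real.sqrt (a*(2*c-a)*Real.cos θ^2 + c^2*Real.sin θ^2))^4
      = 2*π*c^2*(2*a^2 - 4*a*c + 3*c^2) := by
  have key : ∀ θ : ℝ,
      ((c-a)*Real.sin θ + Real.sqrt (a*(2*c-a)*Real.cos θ^2 + c^2*Real.sin θ^2))^4
      = (8*(c-a)^4*Real.sin θ^4 + 8*(a*(2*c-a))*(c-a)^2*Real.sin θ^2 + (a*(2*c-a))^2)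
        + 4*((c-a)*Real.sin θ)*Real.sqrt (a*(2*c-a)*Real.cos θ^2 + c^2*Real.sin θ^2)
            *(2*((c-a)*Real.sin θ)^2 + a*(2*c-a)) := by
    intro θ
    have harg : 0 ≤ a*(2*c-a)*Real.cos θ^2 + c^2*Real.sin θ^2 := by
      have h1 : 0 ≤ a*(2*c-a)*Real.cos θ^2 :=
        mul_nonneg (mul_nonneg ha.le (by linarith)) (sq_nonneg _)
      have h2 : 0 ≤ c^2*Real.sin θ^2 := mul_nonneg (sq_nonneg _) (sq_nonneg _)
      linarith
    set s := Real.sqrt (a*(2*c-a)*Real.cos θ^2 + c^2*Real.sin θ^2) with hs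
    have hs2 : s^2 = ((c-a)*Real.sin θ)^2 + a*(2*c-a) := by
      rw [hs, Real.sq_sqrt harg]
      have h := Real.sin_sq_add_cos_sq θ
      nlinarith [h]
    linear_combination (7*((c-a)*Real.sin θ)^2 + 4*((c-a)*Real.sin θ)*s + s^2 + a*(2*c-a)) * hs2
  simp only [key]
  have hcont : Continuous fun θ : ℝ => Real.sqrt (a*(2*c-a)*Real.cos θ^2 + c^2*Real.sin θ^2) := by
    fun_prop
  have hE : IntervalIntegrable (fun θ : ℝ =>
      8*(c-a)^4*Real.sin θ^4 + 8*(a*(2*c-a))*(c-a)^2*Real.sin θ^2 + (a*(2*c-a))^2)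
      volume (-π) π := by
    apply Continuous.intervalIntegrable; fun_prop
  have hO : IntervalIntegrable (fun θ : ℝ =>
      4*((c-a)*Real.sin θ)*Real.sqrt (a*(2*c-a)*Real.cos θ^2 + c^2*Real.sin θ^2)
        *(2*((c-a)*Real.sin θ)^2 + a*(2*c-a))) volume (-π) π := by
    apply Continuous.intervalIntegrable
    exact (((continuous_const.mul (continuous_const.mul Real.continuous_sin)).mul hcont).mul
      (by fun_prop))
  rw [intervalIntegral.integral_add hE hO]
  have hOdd : (∫ θ in (-π)..π,
      4*((c-a)*Real.sin θ)*Real.sqrt (a*(2*c-a)*Real.cos θ^2 + c^2*Real.sin θ^2)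
        *(2*((c-a)*Real.sin θ)^2 + a*(2*c-a))) = 0 := by
    set O : ℝ → ℝ := fun θ =>
      4*((c-a)*Real.sin θ)*Real.sqrt (a*(2*c-a)*Real.cos θ^2 + c^2*Real.sin θ^2)
        *(2*((c-a)*Real.sin θ)^2 + a*(2*c-a)) with hOdef
    have hneg : ∀ x : ℝ, O (-x) = -O x := by
      intro x
      simp only [hOdef, Real.sin_neg, Real.cos_neg, neg_sq]
      ring
    have h := intervalIntegral.integral_comp_neg (a := -π) (b := π) O
    simp only [neg_neg] at h
    have h2 : (∫ x in (-π)..π, O (-x)) = ∫ x in (-π)..π, -O x := by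
      apply intervalIntegral.integral_congr
      intro x _; exact hneg x
    rw [h2, intervalIntegral.integral_neg] at h
    linarith
  rw [hOdd, add_zero]
  have I2 : (∫ θ in (-π)..π, Real.sin θ^2) = π := by
    rw [integral_sin_sq]
    simp [Real.sin_pi]
  have I4 : (∫ θ in (-π)..π, Real.sin θ^4) = 3*π/4 := by
    have h := integral_sin_pow (a := -π) (b := π) 2
    norm_num at h
    rw [h]; ring
  have hi4 : IntervalIntegrable (fun θ : ℝ => 8*(c-a)^4*Real.sin θ^4) volume (-π) π := by
    apply Continuous.intervalIntegrable; fun_prop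
  have hi2 : IntervalIntegrable (fun θ : ℝ => 8*(a*(2*c-a))*(c-a)^2*Real.sin θ^2) volume (-π) π := by
    apply Continuous.intervalIntegrable; fun_prop
  have hic : IntervalIntegrable (fun _ : ℝ => (a*(2*c-a))^2) volume (-π) π :=
    intervalIntegrable_const
  rw [intervalIntegral.integral_add (hi4.add hi2) hic,
    intervalIntegral.integral_add hi4 hi2,
    intervalIntegral.integral_const_mul, intervalIntegral.integral_const_mul,
    intervalIntegral.integral_const, smul_eq_mul, I2, I4]
  ring
end

section
/- Let 0 < a < c and define R_e(θ) = (c-a)sin θ + sqrt(a(2c-a)cos²θ + c²sin²θ). Then ∫_{-π}^{π} R_e(θ)³ sin θ dθ = 3π(c-a)c². -/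
open Real Filter Asymptotics MeasureTheory Set Topology

theorem stmt8 (a c : ℝ) (ha : 0 < a) (hac : a < c) :
    ∫ θ in (-π)..π,
        ((c-a)*Real.sin θ + Real.sqrt (a*(2*c-a)*Real.cos θ^2 + c^2*Real.sin θ^2))^3 * Real.sin θ
      = 3*π*(c-a)*c^2 := by
  have hK : (0:ℝ) < a*(2*c-a) := mul_pos ha (by linarith)
  set A := c - a with hA
  set K := a*(2*c-a) with hKdef
  have key : ∀ θ : ℝ, ((c-a)*Real.sin θ + Real.sqrt (a*(2*c-a)*Real.cos θ^2 + c^2*Real.sin θ^2))^3 * Real.sin θ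
      = (4*A^3*Real.sin θ^4 + 3*A*K*Real.sin θ^2)
        + (Real.sin θ * Real.sqrt (K + A^2*Real.sin θ^2) * (K + 4*A^2*Real.sin θ^2)) := by
    intro θ
    have h1 : a*(2*c-a)*Real.cos θ^2 + c^2*Real.sin θ^2 = K + A^2*Real.sin θ^2 := by
      have h := Real.sin_sq_add_cos_sq θ
      rw [hKdef, hA]; nlinarith [h]
    rw [h1]
    have hnn : 0 ≤ K + A^2*Real.sin θ^2 := by positivity
    have hs : Real.sqrt (K + A^2*Real.sin θ^2)^2 = K + A^2*Real.sin θ^2 := Real.sq_sqrt hnn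
    rw [hA]
    linear_combination (3*(c-a)*Real.sin θ^2 + Real.sqrt (K + (c-a)^2*Real.sin θ^2) * Real.sin θ) * hs
  rw [intervalIntegral.integral_congr (g := fun θ => (4*A^3*Real.sin θ^4 + 3*A*K*Real.sin θ^2)
        + (Real.sin θ * Real.sqrt (K + A^2*Real.sin θ^2) * (K + 4*A^2*Real.sin θ^2)))
      (fun θ _ => key θ)]
  have hcont1 : Continuous fun θ : ℝ => 4*A^3*Real.sin θ^4 + 3*A*K*Real.sin θ^2 := by fun_prop
  have hcont2 : Continuous fun θ : ℝ => Real.sin θ * Real.sqrt (K + A^2*Real.sin θ^2) * (K + 4*A^2*Real.sin θ^2) := by fun_prop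
  rw [intervalIntegral.integral_add (hcont1.intervalIntegrable _ _) (hcont2.intervalIntegrable _ _)]
  have hodd : (∫ θ in (-π)..π, Real.sin θ * Real.sqrt (K + A^2*Real.sin θ^2) * (K + 4*A^2*Real.sin θ^2)) = 0 := by
    have h1 : (∫ θ in (-π)..π, Real.sin (-θ) * Real.sqrt (K + A^2*Real.sin (-θ)^2) * (K + 4*A^2*Real.sin (-θ)^2))
        = ∫ θ in (-π)..π, Real.sin θ * Real.sqrt (K + A^2*Real.sin θ^2) * (K + 4*A^2*Real.sin θ^2) := by
      rw [intervalIntegral.integral_comp_neg (fun θ => Real.sin θ * Real.sqrt (K + A^2*Real.sin θ^2) * (K + 4*A^2*Real.sin θ^2))]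
      simp
    simp only [Real.sin_neg, neg_sq, neg_mul] at h1
    rw [intervalIntegral.integral_neg] at h1
    linarith [h1]
  rw [hodd, add_zero]
  have hsin2 : (∫ θ in (-π)..π, Real.sin θ^2) = π := by
    rw [integral_sin_sq]; simp [Real.sin_pi]
  have hsin4 : (∫ θ in (-π)..π, Real.sin θ^4) = 3*π/4 := by
    have h := integral_sin_pow (a := -π) (b := π) 2
    rw [hsin2] at h
    norm_num [Real.sin_pi] at h
    rw [h]; ring
  have : (∫ θ in (-π)..π, 4*A^3*Real.sin θ^4 + 3*A*K*Real.sin θ^2)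
      = 4*A^3*(3*π/4) + 3*A*K*π := by
    rw [intervalIntegral.integral_add (by apply Continuous.intervalIntegrable; fun_prop)
        (by apply Continuous.intervalIntegrable; fun_prop),
      intervalIntegral.integral_const_mul, intervalIntegral.integral_const_mul, hsin2, hsin4]
  rw [this, hA, hKdef]; ring
end

section
/- Let d > 0, a₂ > 0, b > 0, and ρ₀ > 0. Then there exists a constant C > 0 such that for all sufficiently small r ∈ (0, ρ₀), the integral ∫_r^{ρ₀} exp(−π(r^{−d} − ρ^{−d})/(a₂ d)) ρ^{2b+d−1} dρ is at most C·r^{2b+2d}. -/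
open Real Filter Asymptotics MeasureTheory Set Topology

/-! With `c = π / (a₂ d)` and `m = 2b + 2d`, split the integral at `2r`. On `[r, 2r]` bound `ρ ^ m`
by `(2r) ^ m`; what remains, `exp (-c (r⁻ᵈ - ρ⁻ᵈ)) ρ^(-d-1)`, is the derivative of
`-exp (-c (r⁻ᵈ - ρ⁻ᵈ)) / (c d)`, so its integral is at most `1 / (c d)`. On `[2r, ρ₀]` we have
`ρ⁻ᵈ ≤ 2⁻ᵈ r⁻ᵈ`, so the exponential factor is at most `exp (-c (1 - 2⁻ᵈ) r⁻ᵈ)`, which is eventually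
smaller than any power of `r`. -/

lemma eventually_exp_neg_mul_rpow_neg_le_rpow {A d : ℝ} (hA : 0 < A) (hd : 0 < d) (M : ℝ) :
    ∀ᶠ r in 𝓝[>] (0:ℝ), exp (-A * r ^ (-d)) ≤ r ^ M := by
  have hlim : Tendsto (fun r : ℝ => (r ^ (-d)) ^ (M / d) * exp (-A * r ^ (-d))) (𝓝[>] 0) (𝓝 0) :=
    (tendsto_rpow_mul_exp_neg_mul_atTop_nhds_zero _ _ hA).comp
      (tendsto_rpow_neg_nhdsGT_zero (neg_neg_of_pos hd))
  filter_upwards [hlim.eventually_lt_const one_pos, self_mem_nhdsWithin] with r hlt (hr : 0 < r)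
  have hpow : (r ^ (-d)) ^ (M / d) = r ^ (-M) := by
    rw [← rpow_mul hr.le]; field_simp
  rw [hpow] at hlt
  calc exp (-A * r ^ (-d)) = r ^ M * (r ^ (-M) * exp (-A * r ^ (-d))) := by
        rw [← mul_assoc, ← rpow_add hr, add_neg_cancel, rpow_zero, one_mul]
    _ ≤ r ^ M := mul_le_of_le_one_right (by positivity) hlt.le

lemma intervalIntegrable_exp_mul_rpow (c d p r : ℝ) {a b : ℝ} (ha : 0 < a) (hb : 0 < b) :
    IntervalIntegrable (fun ρ => exp (-c * (r ^ (-d) - ρ ^ (-d))) * ρ ^ p) volume a b := by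
  refine ContinuousOn.intervalIntegrable fun x hx => ?_
  have hx : x ≠ 0 := (lt_min ha hb |>.trans_le hx.1).ne'
  have hcont : ContinuousAt (fun ρ => exp (-c * (r ^ (-d) - ρ ^ (-d))) * ρ ^ p) x := by
    fun_prop (disch := exact Or.inl hx)
  exact hcont.continuousWithinAt

lemma integral_exp_mul_rpow_le_of_le {c d m r s : ℝ} (hc : 0 < c) (hd : 0 < d) (hm : 0 ≤ m)
    (hr : 0 < r) (hrs : r ≤ s) :
    ∫ ρ in r..s, exp (-c * (r ^ (-d) - ρ ^ (-d))) * ρ ^ (m - d - 1) ≤ s ^ m / (c * d) := by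
  have hpos : ∀ x ∈ uIcc r s, 0 < x := fun x hx => hr.trans_le (by simpa [hrs] using hx.1)
  set G : ℝ → ℝ := fun ρ => -exp (-c * (r ^ (-d) - ρ ^ (-d))) / (c * d)
  have hG : ∀ x ∈ uIcc r s,
      HasDerivAt G (exp (-c * (r ^ (-d) - x ^ (-d))) * x ^ (-d - 1)) x := by
    intro x hx
    have hrpow := hasDerivAt_rpow_const (p := -d) (Or.inl (hpos x hx).ne')
    refine ((((hrpow.const_sub (r ^ (-d))).const_mul (-c)).exp).neg.div_const (c * d)).congr_deriv ?_
    field_simp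
  have hbound : ∀ x ∈ Icc r s, exp (-c * (r ^ (-d) - x ^ (-d))) * x ^ (m - d - 1) ≤
      s ^ m * (exp (-c * (r ^ (-d) - x ^ (-d))) * x ^ (-d - 1)) := by
    intro x hx
    have hx0 : 0 < x := hr.trans_le hx.1
    rw [show m - d - 1 = m + (-d - 1) by ring, rpow_add hx0]
    calc exp (-c * (r ^ (-d) - x ^ (-d))) * (x ^ m * x ^ (-d - 1))
        = x ^ m * (exp (-c * (r ^ (-d) - x ^ (-d))) * x ^ (-d - 1)) := by ring
      _ ≤ s ^ m * (exp (-c * (r ^ (-d) - x ^ (-d))) * x ^ (-d - 1)) := by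
        gcongr
        exact hx.2
  calc ∫ ρ in r..s, exp (-c * (r ^ (-d) - ρ ^ (-d))) * ρ ^ (m - d - 1)
      ≤ ∫ ρ in r..s, s ^ m * (exp (-c * (r ^ (-d) - ρ ^ (-d))) * ρ ^ (-d - 1)) :=
        intervalIntegral.integral_mono_on hrs
          (intervalIntegrable_exp_mul_rpow c d _ r hr (hr.trans_le hrs))
          ((intervalIntegrable_exp_mul_rpow c d _ r hr (hr.trans_le hrs)).const_mul _) hbound
    _ = s ^ m * (G s - G r) := by
        rw [intervalIntegral.integral_const_mul, intervalIntegral.integral_eq_sub_of_hasDerivAt hG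
          (intervalIntegrable_exp_mul_rpow c d _ r hr (hr.trans_le hrs))]
    _ ≤ s ^ m / (c * d) := by
        have hs : 0 ≤ s ^ m := rpow_nonneg (hr.le.trans hrs) m
        simp only [G, sub_self, mul_zero, exp_zero]
        calc s ^ m * (-exp (-c * (r ^ (-d) - s ^ (-d))) / (c * d) - -1 / (c * d))
            = s ^ m / (c * d) - s ^ m * exp (-c * (r ^ (-d) - s ^ (-d))) / (c * d) := by ring
          _ ≤ s ^ m / (c * d) := sub_le_self _ (by positivity)

lemma integral_exp_mul_rpow_le_of_two_mul_le {c d p r s : ℝ} (hc : 0 < c) (hd : 0 < d)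
    (hp : -1 < p) (hr : 0 < r) (hrs : 2 * r ≤ s) :
    ∫ ρ in 2 * r..s, exp (-c * (r ^ (-d) - ρ ^ (-d))) * ρ ^ p ≤
      exp (-(c * (1 - 2 ^ (-d))) * r ^ (-d)) * (s ^ (p + 1) / (p + 1)) := by
  have h2r : 0 < 2 * r := by positivity
  have hbound : ∀ x ∈ Icc (2 * r) s, exp (-c * (r ^ (-d) - x ^ (-d))) * x ^ p ≤
      exp (-(c * (1 - 2 ^ (-d))) * r ^ (-d)) * x ^ p := by
    intro x hx
    have hxd : x ^ (-d) ≤ 2 ^ (-d) * r ^ (-d) := by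
      rw [← mul_rpow zero_le_two hr.le]
      exact rpow_le_rpow_of_nonpos h2r hx.1 (neg_nonpos.2 hd.le)
    refine mul_le_mul_of_nonneg_right (exp_le_exp.2 ?_) (rpow_nonneg (h2r.le.trans hx.1) p)
    nlinarith
  calc ∫ ρ in 2 * r..s, exp (-c * (r ^ (-d) - ρ ^ (-d))) * ρ ^ p
      ≤ ∫ ρ in 2 * r..s, exp (-(c * (1 - 2 ^ (-d))) * r ^ (-d)) * ρ ^ p :=
        intervalIntegral.integral_mono_on hrs
          (intervalIntegrable_exp_mul_rpow c d _ r h2r (h2r.trans_le hrs))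
          ((intervalIntegral.intervalIntegrable_rpow' hp).const_mul _) hbound
    _ = exp (-(c * (1 - 2 ^ (-d))) * r ^ (-d)) * ((s ^ (p + 1) - (2 * r) ^ (p + 1)) / (p + 1)) := by
        rw [intervalIntegral.integral_const_mul, integral_rpow (Or.inl hp)]
    _ ≤ exp (-(c * (1 - 2 ^ (-d))) * r ^ (-d)) * (s ^ (p + 1) / (p + 1)) := by
        have : 0 ≤ (2 * r) ^ (p + 1) := by positivity
        have : 0 < p + 1 := by linarith
        gcongr
        linarith

theorem exists_integral_exp_mul_rpow_le {c d m ρ₀ : ℝ} (hc : 0 < c) (hd : 0 < d) (hdm : d < m)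
    (hρ : 0 < ρ₀) :
    ∃ C > 0, ∀ᶠ r in 𝓝[>] (0:ℝ), r < ρ₀ →
      ∫ ρ in r..ρ₀, exp (-c * (r ^ (-d) - ρ ^ (-d))) * ρ ^ (m - d - 1) ≤ C * r ^ m := by
  have hA : 0 < c * (1 - 2 ^ (-d)) :=
    mul_pos hc (sub_pos.2 (rpow_lt_one_of_one_lt_of_neg one_lt_two (neg_neg_of_pos hd)))
  have hmd : 0 < m - d := sub_pos.2 hdm
  refine ⟨2 ^ m / (c * d) + ρ₀ ^ (m - d) / (m - d), by positivity, ?_⟩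
  filter_upwards [Ioo_mem_nhdsGT (half_pos hρ), eventually_exp_neg_mul_rpow_neg_le_rpow hA hd m]
    with r ⟨hr, hr₀⟩ hexp _
  have h2r : 2 * r ≤ ρ₀ := by linarith
  rw [← intervalIntegral.integral_add_adjacent_intervals
    (intervalIntegrable_exp_mul_rpow c d _ r (b := 2 * r) hr (by positivity))
    (intervalIntegrable_exp_mul_rpow c d _ r (by positivity) hρ)]
  have hnear := integral_exp_mul_rpow_le_of_le hc hd (hd.trans hdm).le hr (by linarith : r ≤ 2 * r)
  rw [mul_rpow zero_le_two hr.le] at hnear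
  have hfar := integral_exp_mul_rpow_le_of_two_mul_le (p := m - d - 1) hc hd (by linarith) hr h2r
  rw [sub_add_cancel] at hfar
  calc _ ≤ 2 ^ m * r ^ m / (c * d) +
          exp (-(c * (1 - 2 ^ (-d))) * r ^ (-d)) * (ρ₀ ^ (m - d) / (m - d)) := add_le_add hnear hfar
    _ ≤ 2 ^ m * r ^ m / (c * d) + r ^ m * (ρ₀ ^ (m - d) / (m - d)) := by gcongr
    _ = _ := by ring

theorem stmt11 (d a₂ b ρ₀ : ℝ) (hd : 0 < d) (ha : 0 < a₂) (hb : 0 < b) (hρ : 0 < ρ₀) :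
    ∃ C > 0, ∀ᶠ r in 𝓝[>] (0:ℝ), r < ρ₀ →
      (∫ ρ in r..ρ₀, Real.exp (-π * (r^(-d) - ρ^(-d)) / (a₂*d)) * ρ^(2*b+d-1))
        ≤ C * r^(2*b+2*d) := by
  obtain ⟨C, hC, hbound⟩ := exists_integral_exp_mul_rpow_le (m := 2 * b + 2 * d)
    (div_pos pi_pos (mul_pos ha hd)) hd (by linarith) hρ
  refine ⟨C, hC, hbound.mono fun r hle hrρ₀ => le_of_eq_of_le ?_ (hle hrρ₀)⟩
  congr 1 with ρ
  rw [show 2 * b + 2 * d - d - 1 = 2 * b + d - 1 by ring]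
  congr 2
  ring
end

section
/- Let w ∈ ℂ with Im w > 0 and let −u ≤ Re w ≤ u with u > 0. The harmonic measure of the interval [−u, u] ⊂ ℝ seen from w in the upper half-plane, given by ω(w) = (1/π)·(arctan((Re w + u)/Im w) − arctan((Re w − u)/Im w)), satisfies ω(w) ≥ (2/π)·arctan(u/|w|) whenever 0 < |w| < u. -/
open Real Filter Asymptotics MeasureTheory Set Topology

/-!
Inside the disc `|w| < u` the addition formula for `arctan` gives
`π ω(w) = π - arctan (2 u Im w / (u² - |w|²))`, so on a circle `|w| = ρ < u` the measure `ω`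
decreases in `Im w ≤ ρ` and is smallest at `w = iρ`, where it equals `(2/π) arctan (u/ρ)`.
-/

noncomputable def harmonicMeasureInterval (u : ℝ) (w : ℂ) : ℝ :=
  (1 / π) * (arctan ((w.re + u) / w.im) - arctan ((w.re - u) / w.im))

theorem arctan_add_arctan_of_sq_add_sq_lt {x y u : ℝ} (hu : 0 < u) (hy : 0 < y)
    (h : x ^ 2 + y ^ 2 < u ^ 2) :
    arctan ((u + x) / y) + arctan ((u - x) / y) =
      π - arctan (2 * u * y / (u ^ 2 - (x ^ 2 + y ^ 2))) := by
  have hxu : -u < x ∧ x < u := abs_lt.mp (abs_lt_of_sq_lt_sq (by nlinarith) hu.le)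
  have hprod : 1 < (u + x) / y * ((u - x) / y) := by
    rw [div_mul_div_comm, one_lt_div (by positivity)]
    nlinarith
  rw [arctan_add_eq_add_pi hprod (div_pos (by linarith) hy)]
  have hquot : ((u + x) / y + (u - x) / y) / (1 - (u + x) / y * ((u - x) / y))
      = -(2 * u * y / (u ^ 2 - (x ^ 2 + y ^ 2))) := by
    have hden : u ^ 2 - (x ^ 2 + y ^ 2) ≠ 0 := by linarith
    rw [div_eq_iff (by linarith)]
    field_simp
    ring
  rw [hquot, arctan_neg]
  ring

theorem harmonicMeasureInterval_eq_one_sub {u : ℝ} {w : ℂ} (him : 0 < w.im) (hw : ‖w‖ < u) :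
    harmonicMeasureInterval u w = 1 - arctan (2 * u * w.im / (u ^ 2 - ‖w‖ ^ 2)) / π := by
  have hnorm : ‖w‖ ^ 2 = w.re ^ 2 + w.im ^ 2 := by
    rw [Complex.sq_norm, Complex.normSq_apply]
    ring
  have hsq : w.re ^ 2 + w.im ^ 2 < u ^ 2 := by
    rw [← hnorm]
    exact pow_lt_pow_left₀ hw (norm_nonneg w) two_ne_zero
  have hsum := arctan_add_arctan_of_sq_add_sq_lt (hw.trans_le' (norm_nonneg w)) him hsq
  have hneg : arctan ((w.re - u) / w.im) = -arctan ((u - w.re) / w.im) := by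
    rw [← arctan_neg, ← neg_div, neg_sub]
  unfold harmonicMeasureInterval
  rw [hneg, sub_neg_eq_add, add_comm w.re, hsum, hnorm]
  field_simp

theorem harmonicMeasureInterval_ofReal_mul_I (u ρ : ℝ) :
    harmonicMeasureInterval u (ρ * Complex.I) = (2 / π) * arctan (u / ρ) := by
  simp only [harmonicMeasureInterval, Complex.re_ofReal_mul, Complex.im_ofReal_mul,
    Complex.I_re, Complex.I_im, mul_zero, mul_one, zero_add, zero_sub, neg_div, arctan_neg]
  ring

theorem harmonicMeasureInterval_norm_mul_I_le {u : ℝ} {w : ℂ} (him : 0 < w.im) (hw : ‖w‖ < u) :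
    harmonicMeasureInterval u (‖w‖ * Complex.I) ≤ harmonicMeasureInterval u w := by
  have hnorm_pos : 0 < ‖w‖ := him.trans_le (Complex.im_le_norm w)
  have hI : ‖(‖w‖ : ℂ) * Complex.I‖ = ‖w‖ := by simp
  have hIim : ((‖w‖ : ℂ) * Complex.I).im = ‖w‖ := by simp
  rw [harmonicMeasureInterval_eq_one_sub him hw,
    harmonicMeasureInterval_eq_one_sub (by rwa [hIim]) (by rwa [hI]), hI, hIim]
  have hden : 0 < u ^ 2 - ‖w‖ ^ 2 := by nlinarith
  gcongr
  · linarith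
  · exact Complex.im_le_norm w

theorem stmt13_general (u : ℝ) (w : ℂ) (him : 0 < w.im)
    (habsu : ‖w‖ < u) :
    (1/π) * (Real.arctan ((w.re + u)/w.im) - Real.arctan ((w.re - u)/w.im))
      ≥ (2/π) * Real.arctan (u / ‖w‖) := by
  rw [← harmonicMeasureInterval_ofReal_mul_I]
  exact harmonicMeasureInterval_norm_mul_I_le him habsu

theorem stmt13 (u : ℝ) (hu : 0 < u) (w : ℂ) (him : 0 < w.im)
    (hre₁ : -u ≤ w.re) (hre₂ : w.re ≤ u)
    (habs : 0 < ‖w‖) (habsu : ‖w‖ < u) :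
    (1/π) * (Real.arctan ((w.re + u)/w.im) - Real.arctan ((w.re - u)/w.im))
      ≥ (2/π) * Real.arctan (u / ‖w‖) :=
  stmt13_general u w him habsu
end

section
/- Let x ∈ ℝ \ ℤ. Then 1/sin²(πx) = 1/(π²x²) + (2/π²)·Σ_{k=1}^∞ (x² + k²)/((x² − k²)²). -/
open Real Filter Asymptotics MeasureTheory Set Topology

/-
Parseval's identity for `t ↦ exp (2πixt)` on `[0, 1]`: its `n`-th Fourier coefficient is
`(exp (2πix) - 1) / (2πi(x - n))`, of modulus `|sin (πx)| / (π |x - n|)`, and its squared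
`L²` norm is `1`. Hence `∑_{n ∈ ℤ} 1 / (x - n)² = π² / sin² (πx)`, and pairing the terms `n`
and `-n` (with `n = 0` split off) gives the stated series.
-/

lemma Real.sin_pi_mul_ne_zero {x : ℝ} (hx : ∀ n : ℤ, x ≠ n) : Real.sin (π * x) ≠ 0 := by
  rw [Real.sin_ne_zero_iff]
  intro n h
  exact hx n (mul_left_cancel₀ pi_ne_zero (by linarith)).symm

section

open Complex

lemma fourierCoeffOn_exp_two_pi_I_mul {a : ℂ} {n : ℤ} (ha : a ≠ n) :
    fourierCoeffOn zero_lt_one (fun t : ℝ => exp (2 * π * I * a * t)) n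
      = (exp (2 * π * I * a) - 1) / (2 * π * I * (a - n)) := by
  have hc : 2 * π * I * (a - n) ≠ 0 := by simp [pi_ne_zero, sub_ne_zero.2 ha]
  have hprod : ∀ t : ℝ, fourier (-n) (t : AddCircle (1 - 0 : ℝ)) • exp (2 * π * I * a * t)
      = exp (2 * π * I * (a - n) * t) := by
    intro t
    rw [fourier_coe_apply, smul_eq_mul, ← Complex.exp_add]
    push_cast
    ring_nf
  have hperiod : exp (2 * π * I * (a - n)) = exp (2 * π * I * a) := by
    rw [mul_sub, Complex.exp_sub, mul_comm _ (n : ℂ), exp_int_mul_two_pi_mul_I, div_one]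
  rw [fourierCoeffOn_eq_integral]
  simp_rw [hprod, integral_exp_mul_complex hc]
  simp [hperiod]

lemma norm_sq_fourierCoeffOn_exp_two_pi_I_mul {x : ℝ} {n : ℤ} (hx : x ≠ n) :
    ‖fourierCoeffOn zero_lt_one (fun t : ℝ => exp (2 * π * I * x * t)) n‖ ^ 2
      = Real.sin (π * x) ^ 2 / π ^ 2 * (1 / (x - n) ^ 2) := by
  have hxn : (x : ℂ) ≠ n := by exact_mod_cast hx
  have hnum : ‖exp (2 * π * I * x) - 1‖ = 2 * |Real.sin (π * x)| := by
    rw [show 2 * π * I * x = I * ((2 * π * x : ℝ) : ℂ) by push_cast; ring,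
      norm_exp_I_mul_ofReal_sub_one, norm_mul, Real.norm_eq_abs]
    ring_nf
    simp
  have hden : ‖2 * π * I * ((x : ℂ) - n)‖ = 2 * π * |x - n| := by
    simp only [norm_mul, Complex.norm_ofNat, Complex.norm_real, norm_I, Real.norm_eq_abs,
      abs_of_pos pi_pos, mul_one]
    rw [← Real.norm_eq_abs, ← Complex.norm_real]
    push_cast
    rfl
  rw [fourierCoeffOn_exp_two_pi_I_mul hxn, norm_div, hnum, hden, div_pow, mul_pow, mul_pow,
    sq_abs, sq_abs]
  have : x - n ≠ 0 := sub_ne_zero.2 hx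
  field_simp

theorem hasSum_one_div_sub_int_sq {x : ℝ} (hx : ∀ n : ℤ, x ≠ n) :
    HasSum (fun n : ℤ => 1 / (x - n) ^ 2) (π ^ 2 / Real.sin (π * x) ^ 2) := by
  have hnorm : ∀ t : ℝ, ‖exp (2 * π * I * x * t)‖ = 1 := fun t => by
    rw [show 2 * π * I * x * t = ((2 * π * x * t : ℝ) : ℂ) * I by push_cast; ring,
      norm_exp_ofReal_mul_I]
  have hL2 : MemLp (fun t : ℝ => exp (2 * π * I * x * t)) 2 (volume.restrict (Ioc 0 1)) :=
    .of_bound (by fun_prop : Continuous _).aestronglyMeasurable 1 (ae_of_all _ fun t => (hnorm t).le)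
  have hParseval := hasSum_sq_fourierCoeffOn zero_lt_one hL2
  simp only [hnorm, norm_sq_fourierCoeffOn_exp_two_pi_I_mul (hx _)] at hParseval
  have hsin : Real.sin (π * x) ≠ 0 := Real.sin_pi_mul_ne_zero hx
  have hmean : (1 - 0 : ℝ)⁻¹ • ∫ _ in (0 : ℝ)..1, (1 : ℝ) ^ 2 = 1 := by simp
  have hcancel : Real.sin (π * x) ^ 2 / π ^ 2 * (π ^ 2 / Real.sin (π * x) ^ 2) = 1 := by
    field_simp
  refine (hasSum_mul_left_iff (a₂ := Real.sin (π * x) ^ 2 / π ^ 2) (by positivity)).1 ?_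
  rw [hmean] at hParseval
  rwa [hcancel]

end

theorem HasSum.nat_add_one_add_neg_add_one {G : Type*} [AddCommGroup G] [TopologicalSpace G]
    [IsTopologicalAddGroup G] {f : ℤ → G} {m : G} (hf : HasSum f m) :
    HasSum (fun n : ℕ => f (n + 1) + f (-(n + 1))) (m - f 0) := by
  have h := (hasSum_nat_add_iff' 1).2 hf.nat_add_neg
  convert h using 1
  · simp
  · simp

lemma one_div_sub_sq_add_one_div_add_sq {x k : ℝ} (h₁ : x - k ≠ 0) (h₂ : x + k ≠ 0) :
    1 / (x - k) ^ 2 + 1 / (x + k) ^ 2 = 2 * ((x ^ 2 + k ^ 2) / (x ^ 2 - k ^ 2) ^ 2) := by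
  rw [show x ^ 2 - k ^ 2 = (x - k) * (x + k) by ring]
  field_simp
  ring

theorem stmt14 (x : ℝ) (hx : ∀ n : ℤ, x ≠ n) :
    1 / Real.sin (π*x)^2
      = 1/(π^2*x^2) + (2/π^2) * ∑' k : ℕ, (x^2 + (k+1:ℝ)^2)/((x^2 - (k+1:ℝ)^2)^2) := by
  have hpair (k : ℕ) : 1 / (x - ((k + 1 : ℤ) : ℝ)) ^ 2 + 1 / (x - ((-(k + 1) : ℤ) : ℝ)) ^ 2
      = 2 * ((x ^ 2 + (k + 1 : ℝ) ^ 2) / (x ^ 2 - (k + 1 : ℝ) ^ 2) ^ 2) := by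
    have hpos := hx (k + 1)
    have hneg := hx (-(k + 1))
    push_cast at hpos hneg ⊢
    rw [sub_neg_eq_add]
    refine one_div_sub_sq_add_one_div_add_sq (sub_ne_zero.2 hpos) fun h => hneg ?_
    linarith
  have hsum := (hasSum_one_div_sub_int_sq hx).nat_add_one_add_neg_add_one
  simp only [hpair, Int.cast_zero, sub_zero] at hsum
  have hx0 : x ≠ 0 := by exact_mod_cast hx 0
  have hsin : Real.sin (π * x) ≠ 0 := Real.sin_pi_mul_ne_zero hx
  have htsum : ∑' k : ℕ, (x^2 + (k+1:ℝ)^2)/((x^2 - (k+1:ℝ)^2)^2)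
      = (π ^ 2 / Real.sin (π * x) ^ 2 - 1 / x ^ 2) / 2 := by
    rw [eq_div_iff two_ne_zero, mul_comm, ← tsum_mul_left, hsum.tsum_eq]
  rw [htsum]
  field_simp
  ring
end
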